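/- arXiv:2508.01108 — 4 statements merged into one kernel-verified Lean document; each statement's English description precedes it below -/
import Mathlib

section
/- Let D be a finite set of n points in ℝ^d whose scores under f ∈ ℝ^d are pairwise distinct, let N ⊆ D with |N| = m be an ε-sample of D with respect to the half-spaces {H_θ : θ ∈ ℝ}, and let 1 ≤ i ≤ n. Set i_ℓ = ⌊m(i/n − ε)⌋ and i_u = ⌈m(i/n + ε)⌉, and suppose 1 ≤ i_ℓ and i_u ≤ m. Then the score of the i-th ranked point p^(i) of D is bounded between the scores of the i_u-th and i_ℓ-th ranked points of N: ⟨f, rank⁻¹_{N,f}(i_u)⟩ ≤ ⟨f, p^(i)⟩ ≤ ⟨f, rank⁻¹_{N,f}(i_ℓ)⟩. -/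
/-- The score of a point `p` under the linear scoring vector `f`,
i.e. the standard inner product `⟨f, p⟩`. -/
noncomputable def score {d : ℕ} (f p : EuclideanSpace ℝ (Fin d)) : ℝ := inner ℝ f p

open Classical in
/-- The rank of `p` in the finite set `X` under scoring vector `f`:
points are ordered in strictly decreasing order of score, so
`rank = 1 + #{q ∈ X : score q > score p}`. -/
noncomputable def rankOf {d : ℕ} (f : EuclideanSpace ℝ (Fin d))
    (X : Finset (EuclideanSpace ℝ (Fin d))) (p : EuclideanSpace ℝ (Fin d)) : ℕ :=
  1 + (X.filter fun q => score f p < score f q).card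

open Classical in
/-- Let `N ⊆ D` with `|N| = m` be an `ε`-sample of `D` (half-space ranges `H_θ`),
`1 ≤ i ≤ n`, `i_ℓ = ⌊m(i/n − ε)⌋`, `i_u = ⌈m(i/n + ε)⌉`, with `1 ≤ i_ℓ` and `i_u ≤ m`.
Then the score of `p⁽ⁱ⁾` is bounded between the scores of the `i_u`-th and the `i_ℓ`-th
ranked points of `N`:
`⟨f, rank⁻¹_N(i_u)⟩ ≤ ⟨f, p⁽ⁱ⁾⟩ ≤ ⟨f, rank⁻¹_N(i_ℓ)⟩`. -/
theorem stmt_5 {d n m : ℕ} (hd : 1 ≤ d) (f : EuclideanSpace ℝ (Fin d))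
    (D N : Finset (EuclideanSpace ℝ (Fin d))) (hn : D.card = n)
    (hND : N ⊆ D) (hm : N.card = m)
    (hdist : ∀ p ∈ D, ∀ q ∈ D, p ≠ q → score f p ≠ score f q)
    (ε : ℝ)
    (hsample : ∀ θ : ℝ,
      |((N.filter fun q => θ ≤ score f q).card : ℝ) / m -
        ((D.filter fun q => θ ≤ score f q).card : ℝ) / n| ≤ ε)
    (i : ℕ) (hi1 : 1 ≤ i) (hin : i ≤ n)
    (pi : EuclideanSpace ℝ (Fin d)) (hpi : pi ∈ D) (hrank : rankOf f D pi = i)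
    (hiℓ : 1 ≤ ⌊(m : ℝ) * ((i : ℝ) / n - ε)⌋)
    (hiu : ⌈(m : ℝ) * ((i : ℝ) / n + ε)⌉ ≤ (m : ℤ))
    (qℓ qu : EuclideanSpace ℝ (Fin d)) (hqℓ : qℓ ∈ N) (hqu : qu ∈ N)
    (hqℓrank : (rankOf f N qℓ : ℤ) = ⌊(m : ℝ) * ((i : ℝ) / n - ε)⌋)
    (hqurank : (rankOf f N qu : ℤ) = ⌈(m : ℝ) * ((i : ℝ) / n + ε)⌉) :
    score f qu ≤ score f pi ∧ score f pi ≤ score f qℓ := by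
  classical
  have hm0 : 0 < m := by
    have h := Finset.card_pos.mpr ⟨qℓ, hqℓ⟩
    omega
  have hn0 : 0 < n := le_trans hi1 hin
  have hmR : (0 : ℝ) < m := by exact_mod_cast hm0
  have hnR : (0 : ℝ) < n := by exact_mod_cast hn0
  have hdistN : ∀ p ∈ N, ∀ q ∈ N, p ≠ q → score f p ≠ score f q :=
    fun p hp q hq => hdist p (hND hp) q (hND hq)
  have hcount : ∀ (X : Finset (EuclideanSpace ℝ (Fin d))),
      (∀ p ∈ X, ∀ q ∈ X, p ≠ q → score f p ≠ score f q) →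
      ∀ q ∈ X, (X.filter fun x => score f q ≤ score f x).card = rankOf f X q := by
    intro X hX q hq
    have hset : X.filter (fun x => score f q ≤ score f x)
        = insert q (X.filter fun x => score f q < score f x) := by
      ext x
      simp only [Finset.mem_filter, Finset.mem_insert]
      constructor
      · rintro ⟨hxX, hle⟩
        rcases lt_or_eq_of_le hle with hlt | heq
        · exact Or.inr ⟨hxX, hlt⟩
        · left
          by_contra hne
          exact hX x hxX q hq hne heq.symm
      · rintro (rfl | ⟨hxX, hlt⟩)
        · exact ⟨hq, le_refl _⟩
        · exact ⟨hxX, le_of_lt hlt⟩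
    rw [hset, Finset.card_insert_of_notMem (by simp), rankOf]
    omega
  have hDpi : ((D.filter fun x => score f pi ≤ score f x).card) = i := by
    rw [hcount D hdist pi hpi, hrank]
  have hDlt : ((D.filter fun x => score f pi < score f x).card) = i - 1 := by
    have h := hrank
    unfold rankOf at h
    omega
  have hsamp := hsample (score f pi)
  rw [hDpi] at hsamp
  rw [abs_le] at hsamp
  -- lower bound: the number of points of N with score ≥ score pi is at least m(i/n - ε)
  have hAlow : (m : ℝ) * ((i : ℝ) / n - ε)
      ≤ ((N.filter fun q => score f pi ≤ score f q).card : ℝ) := by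
    have h1 := hsamp.1
    have h2 : (i : ℝ) / n - ε ≤ ((N.filter fun q => score f pi ≤ score f q).card : ℝ) / m := by
      linarith
    calc (m : ℝ) * ((i : ℝ) / n - ε)
        ≤ (m : ℝ) * (((N.filter fun q => score f pi ≤ score f q).card : ℝ) / m) :=
          mul_le_mul_of_nonneg_left h2 (le_of_lt hmR)
      _ = ((N.filter fun q => score f pi ≤ score f q).card : ℝ) := by
          field_simp
  constructor
  · -- score f qu ≤ score f pi
    by_contra hcon
    push_neg at hcon
    have hsamp2 := hsample (score f qu)
    rw [abs_le] at hsamp2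
    -- N-count at θ' = score qu equals rankOf f N qu
    have hNcount : ((N.filter fun q => score f qu ≤ score f q).card) = rankOf f N qu :=
      hcount N hdistN qu hqu
    -- D-count at θ' is at most i - 1
    have hDle : ((D.filter fun q => score f qu ≤ score f q).card) ≤ i - 1 := by
      rw [← hDlt]
      apply Finset.card_le_card
      intro x hx
      simp only [Finset.mem_filter] at hx ⊢
      exact ⟨hx.1, lt_of_lt_of_le hcon hx.2⟩
    have hDleR : ((D.filter fun q => score f qu ≤ score f q).card : ℝ) ≤ (i : ℝ) - 1 := by
      have : ((D.filter fun q => score f qu ≤ score f q).card : ℝ) ≤ ((i - 1 : ℕ) : ℝ) := by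
        exact_mod_cast hDle
      rw [Nat.cast_sub hi1] at this
      simpa using this
    -- rankOf f N qu ≥ m(i/n + ε)
    have hiu_ge : (m : ℝ) * ((i : ℝ) / n + ε) ≤ (rankOf f N qu : ℝ) := by
      have h1 := Int.le_ceil ((m : ℝ) * ((i : ℝ) / n + ε))
      rw [← hqurank] at h1
      exact_mod_cast h1
    have h2 := hsamp2.2
    rw [hNcount] at h2
    -- from h2: rank/m ≤ Dcount/n + ε ≤ (i-1)/n + ε
    have hdiv : ((D.filter fun q => score f qu ≤ score f q).card : ℝ) / n
        ≤ ((i : ℝ) - 1) / n := by gcongr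
    have h3 : (rankOf f N qu : ℝ) / m ≤ ((i : ℝ) - 1) / n + ε := by linarith
    have h4 : (i : ℝ) / n + ε ≤ (rankOf f N qu : ℝ) / m := by
      rw [le_div_iff₀ hmR]
      nlinarith
    have h5 : (i : ℝ) / n ≤ ((i : ℝ) - 1) / n := by linarith
    have h6 : (i : ℝ) ≤ (i : ℝ) - 1 := by
      have := mul_le_mul_of_nonneg_right h5 (le_of_lt hnR)
      field_simp at this
      linarith
    linarith
  · -- score f pi ≤ score f qℓ
    by_contra hcon
    push_neg at hcon
    set A := (N.filter fun q => score f pi ≤ score f q).card with hAdef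
    have hss : (N.filter fun q => score f pi ≤ score f q)
        ⊆ (N.filter fun x => score f qℓ < score f x) := by
      intro x hx
      simp only [Finset.mem_filter] at hx ⊢
      exact ⟨hx.1, lt_of_lt_of_le hcon hx.2⟩
    have hcard := Finset.card_le_card hss
    -- A ≤ rankOf f N qℓ - 1
    have hrqℓ : rankOf f N qℓ = 1 + (N.filter fun x => score f qℓ < score f x).card := rfl
    -- A ≥ ⌊m(i/n - ε)⌋ = rankOf f N qℓ
    have hAint : (rankOf f N qℓ : ℤ) ≤ (A : ℤ) := by
      rw [hqℓrank]
      have h := Int.floor_mono hAlow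
      rwa [Int.floor_natCast] at h
    have : rankOf f N qℓ ≤ A := by exact_mod_cast hAint
    omega
end

section
/- Let D be a finite set of n points in ℝ^d whose scores under f ∈ ℝ^d are pairwise distinct, and let N ⊆ D with |N| = m be an ε-sample of D with respect to both the half-spaces {H_θ : θ ∈ ℝ} and the stripe ranges {S_{f,ℓ,u} : ℓ ≤ u} in direction f. Let 1 ≤ i ≤ n, set i_ℓ = ⌊m(i/n − ε)⌋ and i_u = ⌈m(i/n + ε)⌉, assume 1 ≤ i_ℓ and i_u ≤ m, and let u = ⟨f, rank⁻¹_{N,f}(i_ℓ)⟩ and ℓ = ⟨f, rank⁻¹_{N,f}(i_u)⟩. Then the conformal set D_o = S_{f,ℓ,u} ∩ D satisfies both: (1) p^(i) ∈ D_o, and (2) |D_o| ≤ n·((i_u − i_ℓ + 1)/m + ε) ≤ 3εn + 3n/m. -/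
open Classical in
lemma filter_ge_card_eq_rank {d : ℕ} (f : EuclideanSpace ℝ (Fin d))
    (X : Finset (EuclideanSpace ℝ (Fin d)))
    (hdist : ∀ p ∈ X, ∀ q ∈ X, p ≠ q → score f p ≠ score f q)
    (p : EuclideanSpace ℝ (Fin d)) (hp : p ∈ X) :
    (X.filter fun q => score f p ≤ score f q).card = rankOf f X p := by
  have hins : X.filter (fun q => score f p ≤ score f q)
      = insert p (X.filter (fun q => score f p < score f q)) := by
    ext q
    simp only [Finset.mem_filter, Finset.mem_insert]
    constructor
    · rintro ⟨hq, hle⟩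
      rcases eq_or_lt_of_le hle with heq | hlt
      · left
        by_contra hne
        exact hdist p hp q hq (fun h => hne h.symm) heq
      · exact Or.inr ⟨hq, hlt⟩
    · rintro (rfl | ⟨hq, hlt⟩)
      · exact ⟨hp, le_refl _⟩
      · exact ⟨hq, hlt.le⟩
  rw [hins, Finset.card_insert_of_notMem (by simp), rankOf]
  omega

open Classical in
/-- Let `N ⊆ D`, `|N| = m`, be an `ε`-sample of `D` for both half-space and stripe ranges
in direction `f`, with pairwise distinct scores on `D`.  For `1 ≤ i ≤ n`, set
`i_ℓ = ⌊m(i/n − ε)⌋`, `i_u = ⌈m(i/n + ε)⌉` (assumed in `[1, m]`), and let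
`u`, `ℓ` be the scores of the `i_ℓ`-th and `i_u`-th ranked points of `N`.  Then the
conformal set `D_o = S_{f,ℓ,u} ∩ D` contains `p⁽ⁱ⁾` and
`|D_o| ≤ n·((i_u − i_ℓ + 1)/m + ε) ≤ 3εn + 3n/m`. -/
theorem stmt_9 {d n m : ℕ} (hd : 1 ≤ d) (f : EuclideanSpace ℝ (Fin d))
    (D N : Finset (EuclideanSpace ℝ (Fin d))) (hn : D.card = n)
    (hND : N ⊆ D) (hm : N.card = m) (hmpos : 0 < m)
    (hdist : ∀ p ∈ D, ∀ q ∈ D, p ≠ q → score f p ≠ score f q)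
    (ε : ℝ) (hε : 0 ≤ ε)
    (hsampleH : ∀ θ : ℝ,
      |((N.filter fun q => θ ≤ score f q).card : ℝ) / m -
        ((D.filter fun q => θ ≤ score f q).card : ℝ) / n| ≤ ε)
    (hsampleS : ∀ l u : ℝ, l ≤ u →
      |((N.filter fun q => l ≤ score f q ∧ score f q ≤ u).card : ℝ) / m -
        ((D.filter fun q => l ≤ score f q ∧ score f q ≤ u).card : ℝ) / n| ≤ ε)
    (i : ℕ) (hi1 : 1 ≤ i) (hin : i ≤ n)
    (pi : EuclideanSpace ℝ (Fin d)) (hpi : pi ∈ D) (hrank : rankOf f D pi = i)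
    (hiℓ : 1 ≤ ⌊(m : ℝ) * ((i : ℝ) / n - ε)⌋)
    (hiu : ⌈(m : ℝ) * ((i : ℝ) / n + ε)⌉ ≤ (m : ℤ))
    (qℓ qu : EuclideanSpace ℝ (Fin d)) (hqℓ : qℓ ∈ N) (hqu : qu ∈ N)
    (hqℓrank : (rankOf f N qℓ : ℤ) = ⌊(m : ℝ) * ((i : ℝ) / n - ε)⌋)
    (hqurank : (rankOf f N qu : ℤ) = ⌈(m : ℝ) * ((i : ℝ) / n + ε)⌉) :
    pi ∈ D.filter (fun q => score f qu ≤ score f q ∧ score f q ≤ score f qℓ) ∧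
    ((D.filter fun q => score f qu ≤ score f q ∧ score f q ≤ score f qℓ).card : ℝ)
      ≤ (n : ℝ) * (((⌈(m : ℝ) * ((i : ℝ) / n + ε)⌉ : ℝ)
          - (⌊(m : ℝ) * ((i : ℝ) / n - ε)⌋ : ℝ) + 1) / m + ε) ∧
    (n : ℝ) * (((⌈(m : ℝ) * ((i : ℝ) / n + ε)⌉ : ℝ)
        - (⌊(m : ℝ) * ((i : ℝ) / n - ε)⌋ : ℝ) + 1) / m + ε)
      ≤ 3 * ε * n + 3 * n / m := by
  classical
  have hn0 : 0 < n := lt_of_lt_of_le hi1 hin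
  have hnR : (0 : ℝ) < n := by exact_mod_cast hn0
  have hmR : (0 : ℝ) < m := by exact_mod_cast hmpos
  set x : ℝ := (m : ℝ) * ((i : ℝ) / n - ε) with hx
  set y : ℝ := (m : ℝ) * ((i : ℝ) / n + ε) with hy
  have hdistN : ∀ p ∈ N, ∀ q ∈ N, p ≠ q → score f p ≠ score f q :=
    fun p hp q hq => hdist p (hND hp) q (hND hq)
  -- First claim: score f pi ≤ score f qℓ
  have hupi : score f pi ≤ score f qℓ := by
    by_contra hcon
    push_neg at hcon
    have hDcard : ((D.filter fun q => score f pi ≤ score f q).card : ℝ) = i := by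
      rw [filter_ge_card_eq_rank f D hdist pi hpi, hrank]
    have hsub : (N.filter fun q => score f pi ≤ score f q) ⊆
        (N.filter fun q => score f qℓ < score f q) :=
      Finset.monotone_filter_right N (fun q _ hq => lt_of_lt_of_le hcon hq)
    have hNle : (N.filter fun q => score f pi ≤ score f q).card + 1 ≤ rankOf f N qℓ := by
      rw [rankOf]
      have := Finset.card_le_card hsub
      omega
    have hNleR : ((N.filter fun q => score f pi ≤ score f q).card : ℝ) + 1 ≤ x := by
      have h1 : (((N.filter fun q => score f pi ≤ score f q).card : ℤ) + 1 : ℤ) ≤ ⌊x⌋ := by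
        rw [← hqℓrank]; exact_mod_cast hNle
      have h2 : (((N.filter fun q => score f pi ≤ score f q).card : ℝ) + 1 : ℝ) ≤ (⌊x⌋ : ℝ) := by
        exact_mod_cast h1
      exact h2.trans (Int.floor_le x)
    have habs := abs_le.1 (hsampleH (score f pi))
    rw [hDcard] at habs
    have hlow : (i : ℝ) / n - ε ≤
        ((N.filter fun q => score f pi ≤ score f q).card : ℝ) / m := by linarith [habs.1]
    have hmul : ((i : ℝ) / n - ε) * m ≤
        ((N.filter fun q => score f pi ≤ score f q).card : ℝ) :=
      (le_div_iff₀ hmR).mp hlow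
    have : x = ((i : ℝ) / n - ε) * m := by rw [hx]; ring
    linarith
  -- Second claim: score f qu ≤ score f pi
  have hlpi : score f qu ≤ score f pi := by
    by_contra hcon
    push_neg at hcon
    have hNcard : ((N.filter fun q => score f qu ≤ score f q).card : ℤ) = ⌈y⌉ := by
      rw [filter_ge_card_eq_rank f N hdistN qu hqu]; exact hqurank
    have hNcardR : y ≤ ((N.filter fun q => score f qu ≤ score f q).card : ℝ) := by
      have : (⌈y⌉ : ℝ) = ((N.filter fun q => score f qu ≤ score f q).card : ℝ) := by
        exact_mod_cast hNcard.symm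
      linarith [Int.le_ceil y]
    have hsub : (D.filter fun q => score f qu ≤ score f q) ⊆
        (D.filter fun q => score f pi < score f q) :=
      Finset.monotone_filter_right D (fun q _ hq => lt_of_lt_of_le hcon hq)
    have hDle : (D.filter fun q => score f qu ≤ score f q).card + 1 ≤ i := by
      have h1 : 1 + (D.filter fun q => score f pi < score f q).card = i := by
        rw [← hrank, rankOf]
      have := Finset.card_le_card hsub
      omega
    have hDleR : ((D.filter fun q => score f qu ≤ score f q).card : ℝ) ≤ (i : ℝ) - 1 := by
      have : (((D.filter fun q => score f qu ≤ score f q).card : ℝ) + 1) ≤ (i : ℝ) := by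
        exact_mod_cast hDle
      linarith
    have habs := abs_le.1 (hsampleH (score f qu))
    have hNdiv : (i : ℝ) / n + ε ≤
        ((N.filter fun q => score f qu ≤ score f q).card : ℝ) / m := by
      rw [le_div_iff₀ hmR]
      calc ((i : ℝ) / n + ε) * m = y := by rw [hy]; ring
        _ ≤ _ := hNcardR
    have hDdiv : ((D.filter fun q => score f qu ≤ score f q).card : ℝ) / n
        ≤ ((i : ℝ) - 1) / n := by
      gcongr
    have hfinal : (i : ℝ) / n + ε ≤ ((i : ℝ) - 1) / n + ε := by linarith [habs.2]
    have : (i : ℝ) / n ≤ ((i : ℝ) - 1) / n := by linarith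
    have := (div_le_div_iff₀ hnR hnR).mp this
    nlinarith
  have hlu : score f qu ≤ score f qℓ := hlpi.trans hupi
  -- membership
  have hmem : pi ∈ D.filter (fun q => score f qu ≤ score f q ∧ score f q ≤ score f qℓ) := by
    simp only [Finset.mem_filter]
    exact ⟨hpi, hlpi, hupi⟩
  refine ⟨hmem, ?_, ?_⟩
  · -- cardinality bound via stripe sample
    have hsplit : (N.filter fun q => score f qu ≤ score f q).card
        = (N.filter fun q => score f qu ≤ score f q ∧ score f q ≤ score f qℓ).card
          + (N.filter fun q => score f qℓ < score f q).card := by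
      have h1 := Finset.card_filter_add_card_filter_not
        (s := N.filter fun q => score f qu ≤ score f q)
        (p := fun q => score f q ≤ score f qℓ)
      rw [Finset.filter_filter, Finset.filter_filter] at h1
      have h2 : (N.filter fun q => score f qu ≤ score f q ∧ ¬ score f q ≤ score f qℓ)
          = (N.filter fun q => score f qℓ < score f q) := by
        apply Finset.filter_congr
        intro q hq
        simp only [not_le, iff_iff_implies_and_implies]
        exact ⟨fun h => h.2, fun h => ⟨hlu.trans h.le, h⟩⟩
      rw [h2] at h1
      omega
    have hT : ((N.filter fun q => score f qu ≤ score f q).card : ℤ) = ⌈y⌉ := by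
      rw [filter_ge_card_eq_rank f N hdistN qu hqu]; exact hqurank
    have hB : ((N.filter fun q => score f qℓ < score f q).card : ℤ) + 1 = ⌊x⌋ := by
      rw [← hqℓrank, rankOf]; push_cast; ring
    have hA : ((N.filter fun q => score f qu ≤ score f q ∧ score f q ≤ score f qℓ).card : ℤ)
        = ⌈y⌉ - ⌊x⌋ + 1 := by
      have : ((N.filter fun q => score f qu ≤ score f q).card : ℤ)
          = ((N.filter fun q => score f qu ≤ score f q ∧ score f q ≤ score f qℓ).card : ℤ)
            + ((N.filter fun q => score f qℓ < score f q).card : ℤ) := by exact_mod_cast hsplit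
      omega
    have hAR : ((N.filter fun q => score f qu ≤ score f q ∧ score f q ≤ score f qℓ).card : ℝ)
        = (⌈y⌉ : ℝ) - (⌊x⌋ : ℝ) + 1 := by exact_mod_cast hA
    have habs := abs_le.1 (hsampleS (score f qu) (score f qℓ) hlu)
    rw [hAR] at habs
    have hDdiv : ((D.filter fun q => score f qu ≤ score f q ∧ score f q ≤ score f qℓ).card : ℝ) / n
        ≤ ((⌈y⌉ : ℝ) - (⌊x⌋ : ℝ) + 1) / m + ε := by linarith [habs.1]
    calc ((D.filter fun q => score f qu ≤ score f q ∧ score f q ≤ score f qℓ).card : ℝ)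
        = (((D.filter fun q => score f qu ≤ score f q ∧ score f q ≤ score f qℓ).card : ℝ) / n) * n := by
          field_simp
      _ ≤ (((⌈y⌉ : ℝ) - (⌊x⌋ : ℝ) + 1) / m + ε) * n := by
          apply mul_le_mul_of_nonneg_right hDdiv hnR.le
      _ = (n : ℝ) * (((⌈y⌉ : ℝ) - (⌊x⌋ : ℝ) + 1) / m + ε) := by ring
  · -- final numeric bound
    have hceil : (⌈y⌉ : ℝ) ≤ y + 1 := (Int.ceil_lt_add_one y).le
    have hfloor : x - 1 ≤ (⌊x⌋ : ℝ) := (Int.sub_one_lt_floor x).le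
    have hyx : y - x = 2 * m * ε := by rw [hx, hy]; ring
    have hnum : (⌈y⌉ : ℝ) - (⌊x⌋ : ℝ) + 1 ≤ 2 * m * ε + 3 := by linarith
    have hstep : (n : ℝ) * (((⌈y⌉ : ℝ) - (⌊x⌋ : ℝ) + 1) / m + ε)
        ≤ (n : ℝ) * ((2 * m * ε + 3) / m + ε) := by
      apply mul_le_mul_of_nonneg_left _ hnR.le
      gcongr
    have heq : (n : ℝ) * ((2 * m * ε + 3) / m + ε) = 3 * ε * n + 3 * n / m := by
      field_simp
      ring
    linarith
end

section
/- Let D be a finite set of n points in ℝ^d whose scores under f ∈ ℝ^d are pairwise distinct, and let N ⊆ D with |N| = m be an ε-sample of D with respect to both the half-spaces {H_θ : θ ∈ ℝ} and the stripe ranges in direction f. Let 1 ≤ i ≤ n, set i_ℓ = ⌊m(i/n − ε)⌋ and i_u = ⌈m(i/n + ε)⌉ with 1 ≤ i_ℓ and i_u ≤ m, let u = ⟨f, rank⁻¹_{N,f}(i_ℓ)⟩, ℓ = ⟨f, rank⁻¹_{N,f}(i_u)⟩, and D_o = {q ∈ D : ℓ ≤ ⟨f, q⟩ ≤ u}. Then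 p^(i) is exactly the point of rank i − |{q ∈ D : ⟨f, q⟩ > u}| within D_o; i.e., sorting D_o in decreasing score order and returning the element at position i − |{q ∈ D : ⟨f, q⟩ > u}| yields the exact answer to the direct-access query (f, i). -/
open Classical in
lemma count_ge_eq {d : ℕ} (f : EuclideanSpace ℝ (Fin d))
    (X : Finset (EuclideanSpace ℝ (Fin d))) (p : EuclideanSpace ℝ (Fin d)) (hp : p ∈ X)
    (hdist : ∀ q ∈ X, q ≠ p → score f q ≠ score f p) :
    (X.filter fun q => score f p ≤ score f q).card
      = (X.filter fun q => score f p < score f q).card + 1 := by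
  have h : X.filter (fun q => score f p ≤ score f q)
      = insert p (X.filter fun q => score f p < score f q) := by
    ext q
    simp only [Finset.mem_filter, Finset.mem_insert]
    constructor
    · rintro ⟨hq, hle⟩
      rcases eq_or_lt_of_le hle with h | h
      · left; by_contra hne; exact hdist q hq hne h.symm
      · right; exact ⟨hq, h⟩
    · rintro (rfl | ⟨hq, h⟩)
      · exact ⟨hp, le_refl _⟩
      · exact ⟨hq, le_of_lt h⟩
  rw [h, Finset.card_insert_of_notMem (by simp)]

open Classical in
lemma score_le_of_count {d : ℕ} (f : EuclideanSpace ℝ (Fin d))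
    (X : Finset (EuclideanSpace ℝ (Fin d))) (p r : EuclideanSpace ℝ (Fin d)) (hp : p ∈ X)
    (hc : (X.filter fun q => score f r < score f q).card
        ≤ (X.filter fun q => score f p < score f q).card) :
    score f p ≤ score f r := by
  by_contra h
  push_neg at h
  have hsub : insert p (X.filter fun q => score f p < score f q)
      ⊆ X.filter fun q => score f r < score f q := by
    intro q hq
    rcases Finset.mem_insert.1 hq with rfl | hq
    · exact Finset.mem_filter.2 ⟨hp, h⟩
    · have := Finset.mem_filter.1 hq
      exact Finset.mem_filter.2 ⟨this.1, lt_trans h this.2⟩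
  have := Finset.card_le_card hsub
  rw [Finset.card_insert_of_notMem (by simp)] at this
  omega

open Classical in
/-- With `N ⊆ D` an `ε`-sample for half-space and stripe ranges in direction `f`,
`1 ≤ i ≤ n`, `i_ℓ = ⌊m(i/n − ε)⌋ ≥ 1`, `i_u = ⌈m(i/n + ε)⌉ ≤ m`,
`u = ⟨f, rank⁻¹_N(i_ℓ)⟩`, `ℓ = ⟨f, rank⁻¹_N(i_u)⟩`, and
`D_o = {q ∈ D : ℓ ≤ ⟨f,q⟩ ≤ u}`: the point `p⁽ⁱ⁾` lies in `D_o` and is exactly the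
point of rank `i − #{q ∈ D : ⟨f,q⟩ > u}` within `D_o`. -/
theorem stmt_11 {d n m : ℕ} (hd : 1 ≤ d) (f : EuclideanSpace ℝ (Fin d))
    (D N : Finset (EuclideanSpace ℝ (Fin d))) (hn : D.card = n)
    (hND : N ⊆ D) (hm : N.card = m) (hmpos : 0 < m)
    (hdist : ∀ p ∈ D, ∀ q ∈ D, p ≠ q → score f p ≠ score f q)
    (ε : ℝ) (hε : 0 ≤ ε)
    (hsampleH : ∀ θ : ℝ,
      |((N.filter fun q => θ ≤ score f q).card : ℝ) / m -
        ((D.filter fun q => θ ≤ score f q).card : ℝ) / n| ≤ ε)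
    (hsampleS : ∀ l u : ℝ, l ≤ u →
      |((N.filter fun q => l ≤ score f q ∧ score f q ≤ u).card : ℝ) / m -
        ((D.filter fun q => l ≤ score f q ∧ score f q ≤ u).card : ℝ) / n| ≤ ε)
    (i : ℕ) (hi1 : 1 ≤ i) (hin : i ≤ n)
    (pi : EuclideanSpace ℝ (Fin d)) (hpi : pi ∈ D) (hrank : rankOf f D pi = i)
    (hiℓ : 1 ≤ ⌊(m : ℝ) * ((i : ℝ) / n - ε)⌋)
    (hiu : ⌈(m : ℝ) * ((i : ℝ) / n + ε)⌉ ≤ (m : ℤ))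
    (qℓ qu : EuclideanSpace ℝ (Fin d)) (hqℓ : qℓ ∈ N) (hqu : qu ∈ N)
    (hqℓrank : (rankOf f N qℓ : ℤ) = ⌊(m : ℝ) * ((i : ℝ) / n - ε)⌋)
    (hqurank : (rankOf f N qu : ℤ) = ⌈(m : ℝ) * ((i : ℝ) / n + ε)⌉) :
    pi ∈ D.filter (fun q => score f qu ≤ score f q ∧ score f q ≤ score f qℓ) ∧
    (rankOf f (D.filter (fun q => score f qu ≤ score f q ∧ score f q ≤ score f qℓ)) pi : ℤ)
      = (i : ℤ) - ((D.filter fun q => score f qℓ < score f q).card : ℤ) := by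
  have hnpos : 0 < n := lt_of_lt_of_le hi1 hin
  have hmR : (0:ℝ) < m := by exact_mod_cast hmpos
  have hnR : (0:ℝ) < n := by exact_mod_cast hnpos
  -- distinctness specialized
  have hdN : ∀ r ∈ N, ∀ q ∈ N, q ≠ r → score f q ≠ score f r := by
    intro r hr q hq hne
    exact hdist q (hND hq) r (hND hr) hne
  have hdD : ∀ r ∈ D, ∀ q ∈ D, q ≠ r → score f q ≠ score f r := by
    intro r hr q hq hne
    exact hdist q hq r hr hne
  -- counts in N
  have hAℓ : (N.filter fun q => score f qℓ ≤ score f q).card = rankOf f N qℓ := by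
    rw [count_ge_eq f N qℓ hqℓ (hdN qℓ hqℓ), rankOf]; omega
  have hAu : (N.filter fun q => score f qu ≤ score f q).card = rankOf f N qu := by
    rw [count_ge_eq f N qu hqu (hdN qu hqu), rankOf]; omega
  -- sample inequalities
  have hSℓ := hsampleH (score f qℓ)
  have hSu := hsampleH (score f qu)
  rw [abs_le] at hSℓ hSu
  set bℓ := (D.filter fun q => score f qℓ ≤ score f q).card with hbℓ
  set bu := (D.filter fun q => score f qu ≤ score f q).card with hbu
  -- bℓ ≤ i
  have hfloor : ((rankOf f N qℓ : ℝ)) ≤ (m : ℝ) * ((i : ℝ) / n - ε) := by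
    have := Int.floor_le ((m : ℝ) * ((i : ℝ) / n - ε))
    have h2 : ((rankOf f N qℓ : ℝ)) = ((⌊(m : ℝ) * ((i : ℝ) / n - ε)⌋ : ℤ) : ℝ) := by
      exact_mod_cast hqℓrank
    push_cast at h2 ⊢
    linarith
  have hceil : (m : ℝ) * ((i : ℝ) / n + ε) ≤ (rankOf f N qu : ℝ) := by
    have := Int.le_ceil ((m : ℝ) * ((i : ℝ) / n + ε))
    have h2 : ((rankOf f N qu : ℝ)) = ((⌈(m : ℝ) * ((i : ℝ) / n + ε)⌉ : ℤ) : ℝ) := by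
      exact_mod_cast hqurank
    push_cast at h2 ⊢
    linarith
  have hbℓi : (bℓ : ℝ) ≤ (i : ℝ) := by
    have h1 : ((N.filter fun q => score f qℓ ≤ score f q).card : ℝ) / m ≤ (i : ℝ) / n - ε := by
      rw [hAℓ, div_le_iff₀ hmR]
      linarith [hfloor]
    have h2 := hSℓ.1
    have h3 : (bℓ : ℝ) / n ≤ (i : ℝ) / n := by linarith
    calc (bℓ : ℝ) = (bℓ : ℝ) / n * n := by field_simp
    _ ≤ (i : ℝ) / n * n := by exact mul_le_mul_of_nonneg_right h3 (le_of_lt hnR)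
    _ = (i : ℝ) := by field_simp
  have hbui : (i : ℝ) ≤ (bu : ℝ) := by
    have h1 : (i : ℝ) / n + ε ≤ ((N.filter fun q => score f qu ≤ score f q).card : ℝ) / m := by
      rw [hAu, le_div_iff₀ hmR]
      linarith [hceil]
    have h2 := hSu.2
    have h3 : (i : ℝ) / n ≤ (bu : ℝ) / n := by linarith
    calc (i : ℝ) = (i : ℝ) / n * n := by field_simp
    _ ≤ (bu : ℝ) / n * n := by exact mul_le_mul_of_nonneg_right h3 (le_of_lt hnR)
    _ = (bu : ℝ) := by field_simp
  have hbℓi' : bℓ ≤ i := by exact_mod_cast hbℓi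
  have hbui' : i ≤ bu := by exact_mod_cast hbui
  -- count relations in D
  have hcℓ : bℓ = (D.filter fun q => score f qℓ < score f q).card + 1 :=
    count_ge_eq f D qℓ (hND hqℓ) (hdD qℓ (hND hqℓ))
  have hcu : bu = (D.filter fun q => score f qu < score f q).card + 1 :=
    count_ge_eq f D qu (hND hqu) (hdD qu (hND hqu))
  have hpirank : (D.filter fun q => score f pi < score f q).card = i - 1 := by
    rw [rankOf] at hrank; omega
  -- score comparisons
  have hl : score f pi ≤ score f qℓ := by
    apply score_le_of_count f D pi qℓ hpi
    omega
  have hu : score f qu ≤ score f pi := by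
    apply score_le_of_count f D qu pi (hND hqu)
    omega
  constructor
  · exact Finset.mem_filter.2 ⟨hpi, hu, hl⟩
  · rw [rankOf]
    have hset : ((D.filter (fun q => score f qu ≤ score f q ∧ score f q ≤ score f qℓ)).filter
        fun q => score f pi < score f q)
        = (D.filter fun q => score f pi < score f q) \ (D.filter fun q => score f qℓ < score f q) := by
      ext q
      simp only [Finset.mem_filter, Finset.mem_sdiff]
      constructor
      · rintro ⟨⟨hq, _, h2⟩, h3⟩
        exact ⟨⟨hq, h3⟩, fun hc => absurd hc.2 (not_lt.2 h2)⟩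
      · rintro ⟨⟨hq, h1⟩, h2⟩
        have h2' : ¬ score f qℓ < score f q := fun hh => h2 ⟨hq, hh⟩
        exact ⟨⟨hq, le_trans hu (le_of_lt h1), not_lt.1 h2'⟩, h1⟩
    have hsub : (D.filter fun q => score f qℓ < score f q) ⊆
        (D.filter fun q => score f pi < score f q) := by
      intro q hq
      have := Finset.mem_filter.1 hq
      exact Finset.mem_filter.2 ⟨this.1, lt_of_le_of_lt hl this.2⟩
    rw [hset, Finset.card_sdiff_of_subset hsub]
    have hle := Finset.card_le_card hsub
    push_cast [Nat.cast_sub hle]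
    omega
end

section
/- Let D be a finite set of n points in ℝ^d whose scores under f ∈ ℝ^d are pairwise distinct, and let N ⊆ D with |N| = m be an ε-sample of D with respect to the half-spaces {H_θ : θ ∈ ℝ}. Then the normalized rank of every sample point is preserved up to additive error ε: for every p ∈ N, | rank_{N,f}(p)/m − rank_{D,f}(p)/n | ≤ ε. -/
open Classical in
/-- If `N ⊆ D` with `|N| = m` is an `ε`-sample of `D` (of size `n`, pairwise distinct
scores) with respect to half-space ranges `H_θ`, then the normalized rank of every
sample point is preserved up to additive error `ε`:
for every `p ∈ N`, `|rank_{N,f}(p)/m − rank_{D,f}(p)/n| ≤ ε`. -/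
theorem stmt_13 {d n m : ℕ} (hd : 1 ≤ d) (f : EuclideanSpace ℝ (Fin d))
    (D N : Finset (EuclideanSpace ℝ (Fin d))) (hn : D.card = n)
    (hND : N ⊆ D) (hm : N.card = m)
    (hdist : ∀ p ∈ D, ∀ q ∈ D, p ≠ q → score f p ≠ score f q)
    (ε : ℝ)
    (hsample : ∀ θ : ℝ,
      |((N.filter fun q => θ ≤ score f q).card : ℝ) / m -
        ((D.filter fun q => θ ≤ score f q).card : ℝ) / n| ≤ ε) :
    ∀ p ∈ N, |(rankOf f N p : ℝ) / m - (rankOf f D p : ℝ) / n| ≤ ε := by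
  intro p hp
  have key : ∀ X : Finset (EuclideanSpace ℝ (Fin d)), X ⊆ D → p ∈ X →
      (X.filter fun q => score f p ≤ score f q).card = rankOf f X p := by
    intro X hXD hpX
    have hset : (X.filter fun q => score f p ≤ score f q)
        = insert p (X.filter fun q => score f p < score f q) := by
      ext q
      simp only [Finset.mem_filter, Finset.mem_insert]
      constructor
      · rintro ⟨hqX, hle⟩
        rcases lt_or_eq_of_le hle with h | h
        · exact Or.inr ⟨hqX, h⟩
        · left
          by_contra hne
          exact hdist q (hXD hqX) p (hXD hpX) hne h.symm
      · rintro (rfl | ⟨hqX, hlt⟩)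
        · exact ⟨hpX, le_refl _⟩
        · exact ⟨hqX, le_of_lt hlt⟩
    rw [hset, Finset.card_insert_of_notMem (by simp), rankOf, Nat.add_comm]
  have h := hsample (score f p)
  rwa [key N hND hp, key D (subset_refl D) (hND hp)] at h
end
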